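/- arXiv:1304.6994 — 2 statements merged into one kernel-verified Lean document; each statement's English description precedes it below -/
import Mathlib

section
/- For n ≥ 1 and D ≥ 1, the n privilege values p_i = 2n + 2·D·i for i ∈ {0,...,n-1} are pairwise at d_K-distance strictly greater than D in Z/KZ, where K = (2n-1)(D+1)+2: for all i ≠ j in {0,...,n-1}, d_K(p_i, p_j) > D. -/
/-!
The gap between `p_i` and `p_j` (say `j < i`) is `2D(i - j)`, with `1 ≤ i - j ≤ n - 1`. It exceeds
`D` since `D ≥ 1`, and going the other way round the cycle, `K - 2D(i - j) ≥ 2n + D + 1 > D`.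
-/

/-- `d_K(c,c') = min((c-c') mod K, (c'-c) mod K)`, with `mod K` taking
values in `{0,...,K-1}`. -/
def dK (K c c' : ℤ) : ℤ := min ((c - c') % K) ((c' - c) % K)

theorem dK_comm (K c c' : ℤ) : dK K c c' = dK K c' c :=
  min_comm _ _

theorem dK_eq_min_of_pos_of_lt {K c c' : ℤ} (h₀ : 0 < c - c') (hK : c - c' < K) :
    dK K c c' = min (c - c') (K - (c - c')) := by
  have hneg : (c' - c) % K = K - (c - c') := by
    rw [Int.emod_eq_add_self_emod, show c' - c + K = K - (c - c') by ring]
    exact Int.emod_eq_of_lt (by omega) (by omega)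
  rw [dK, hneg, Int.emod_eq_of_lt h₀.le hK]

theorem lt_dK_of_lt_sub {K D c c' : ℤ} (hD : 0 ≤ D) (h₁ : D < c - c') (h₂ : D < K - (c - c')) :
    D < dK K c c' := by
  rw [dK_eq_min_of_pos_of_lt (by omega) (by omega)]
  exact lt_min h₁ h₂

theorem stmt7_general (n D : ℤ) (hD : 1 ≤ D)
    (K : ℤ) (hK : K = (2 * n - 1) * (D + 1) + 2) :
    ∀ i j : ℤ, 0 ≤ i → i < n → 0 ≤ j → j < n → i ≠ j →
      D < dK K (2 * n + 2 * D * i) (2 * n + 2 * D * j) := by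
  intro i j hi₀ hin hj₀ hjn hij
  wlog hji : j < i generalizing i j
  · rw [dK_comm]
    exact this j i hj₀ hjn hi₀ hin hij.symm (lt_of_le_of_ne (not_lt.mp hji) hij)
  have hgap : 2 * n + 2 * D * i - (2 * n + 2 * D * j) = 2 * D * (i - j) := by ring
  have hm₁ : 1 ≤ i - j := by omega
  have hm₂ : i - j ≤ n - 1 := by omega
  apply lt_dK_of_lt_sub (by omega) <;> rw [hgap]
  · nlinarith
  · subst hK
    nlinarith

/-- The `n` privilege values `p_i = 2n + 2·D·i`, `i ∈ {0,...,n-1}`, are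
pairwise at `d_K`-distance strictly greater than `D`, where
`K = (2n-1)(D+1)+2`. -/
theorem stmt7 (n D : ℤ) (hn : 1 ≤ n) (hD : 1 ≤ D)
    (K : ℤ) (hK : K = (2 * n - 1) * (D + 1) + 2) :
    ∀ i j : ℤ, 0 ≤ i → i < n → 0 ≤ j → j < n → i ≠ j →
      D < dK K (2 * n + 2 * D * i) (2 * n + 2 * D * j) :=
  stmt7_general n D hD K hK
end

section
/- In the synchronous unison dynamics on a finite connected graph starting from a safety-satisfying configuration (adjacent values at d_K-distance ≤ 1 in Z/KZ with K > 2·diam(g)+2), consider the potential function M(γ) = max over vertices of the 'lag' behind the maximal clock along a shortest path ordering; then the maximal d_K-spread max_{u,v} d_K(r_u, r_v) never increases under a synchronous step. -/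
open scoped Classical

/-- The local order `c ≤_l c'` : `(c'-c) mod K ∈ {0,1}`. -/
def lle (K c c' : ℤ) : Prop := (c' - c) % K = 0 ∨ (c' - c) % K = 1

/-! Since `K > 2 · diam + 2`, a safe configuration unwinds to integer clocks `s` whose neighbours
differ by at most one; then `dK` between any two clocks is `|s u - s v| ≤ diam < K / 2`, so the
spread is `max s - min s`. In these coordinates the step increments exactly the vertices that are
minimal among their neighbours. Every vertex carrying the global minimum is such a vertex, so the
new integer clocks lie in `[min s + 1, max s + 1]` and their spread is at most `max s - min s`. -/

theorem Int.ModEq.eq_of_abs_sub_lt {n a b : ℤ} (h : a ≡ b [ZMOD n]) (hab : |a - b| < n) :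
    a = b :=
  (sub_eq_zero.mp (Int.eq_zero_of_abs_lt_dvd h.dvd (by rwa [abs_sub_comm]))).symm

section dK

variable {K : ℤ}

theorem dK_self (c : ℤ) : dK K c c = 0 := by
  simp [dK]

theorem dK_le_abs_of_modEq (hK : 0 < K) {c c' x : ℤ} (h : c - c' ≡ x [ZMOD K]) :
    dK K c c' ≤ |x| := by
  have emod_le {y : ℤ} (hy : 0 ≤ y) : y % K ≤ y := by
    have := Int.mul_ediv_add_emod y K
    have := Int.ediv_nonneg hy hK.le
    nlinarith
  rcases le_total 0 x with hx | hx
  · calc dK K c c' ≤ (c - c') % K := min_le_left _ _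
      _ = x % K := h
      _ ≤ |x| := (emod_le hx).trans_eq (abs_of_nonneg hx).symm
  · have h' : c' - c ≡ -x [ZMOD K] := by simpa using h.neg
    calc dK K c c' ≤ (c' - c) % K := min_le_right _ _
      _ = (-x) % K := h'
      _ ≤ |x| := (emod_le (neg_nonneg.mpr hx)).trans_eq (abs_of_nonpos hx).symm

theorem exists_modEq_abs_eq_dK (hK : 0 < K) (c c' : ℤ) :
    ∃ x, c - c' ≡ x [ZMOD K] ∧ |x| = dK K c c' := by
  rcases min_choice ((c - c') % K) ((c' - c) % K) with h | h
  · exact ⟨(c - c') % K, (Int.mod_modEq _ _).symm,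
      by rw [abs_of_nonneg (Int.emod_nonneg _ hK.ne'), dK, h]⟩
  · refine ⟨-((c' - c) % K), by simpa using ((Int.mod_modEq (c' - c) K).neg).symm, ?_⟩
    rw [abs_neg, abs_of_nonneg (Int.emod_nonneg _ hK.ne'), dK, h]

theorem dK_triangle (hK : 0 < K) (a b c : ℤ) : dK K a c ≤ dK K a b + dK K b c := by
  obtain ⟨x, hx, hxab⟩ := exists_modEq_abs_eq_dK hK a b
  obtain ⟨y, hy, hybc⟩ := exists_modEq_abs_eq_dK hK b c
  rw [← hxab, ← hybc]
  calc dK K a c ≤ |x + y| := dK_le_abs_of_modEq hK (by simpa using hx.add hy)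
    _ ≤ |x| + |y| := abs_add_le x y

theorem dK_eq_abs_of_modEq (hK : 0 < K) {c c' x : ℤ} (h : c - c' ≡ x [ZMOD K])
    (hx : 2 * |x| ≤ K) : dK K c c' = |x| := by
  refine (dK_le_abs_of_modEq hK h).antisymm (not_lt.mp fun hlt => ?_)
  obtain ⟨y, hy, hyx⟩ := exists_modEq_abs_eq_dK hK c c'
  have : x = y := (h.symm.trans hy).eq_of_abs_sub_lt (by
    calc |x - y| ≤ |x| + |y| := abs_sub _ _
      _ < K := by omega)
  subst this
  omega

theorem lle_iff_nonneg_of_modEq (hK : 2 < K) {c c' x : ℤ} (h : c' - c ≡ x [ZMOD K])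
    (hx : |x| ≤ 1) : lle K c c' ↔ 0 ≤ x := by
  unfold lle
  rw [h]
  obtain rfl | rfl | rfl : x = -1 ∨ x = 0 ∨ x = 1 := by have := abs_le.mp hx; omega
  · have : (-1 : ℤ) % K = K - 1 := by
      rw [← Int.add_mul_emod_self_right (-1) 1 K, Int.emod_eq_of_lt] <;> omega
    omega
  · simp
  · simp [Int.emod_eq_of_lt zero_le_one (by omega : (1 : ℤ) < K)]

end dK

namespace SimpleGraph

variable {V : Type*} {G : SimpleGraph V}

theorem Walk.le_length_of_adj_le_one {d : V → V → ℤ} (hself : ∀ v, d v v = 0)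
    (htri : ∀ u v w, d u w ≤ d u v + d v w) (hadj : ∀ a b, G.Adj a b → d a b ≤ 1) :
    ∀ {u v : V} (p : G.Walk u v), d u v ≤ p.length
  | _, _, .nil => (hself _).le
  | u, w, .cons (v := v) h p => by
    rw [Walk.length_cons, Nat.cast_succ]
    linarith [htri u v w, hadj u v h, p.le_length_of_adj_le_one hself htri hadj]

theorem Connected.le_diam_of_adj_le_one [Finite V] (hG : G.Connected) {d : V → V → ℤ}
    (hself : ∀ v, d v v = 0) (htri : ∀ u v w, d u w ≤ d u v + d v w)
    (hadj : ∀ a b, G.Adj a b → d a b ≤ 1) (u v : V) : d u v ≤ G.diam := by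
  have := hG.nonempty
  obtain ⟨p, hp⟩ := (hG u v).exists_walk_length_eq_dist
  calc d u v ≤ p.length := p.le_length_of_adj_le_one hself htri hadj
    _ ≤ G.diam := by
      rw [hp]
      exact_mod_cast dist_le_diam (connected_iff_ediam_ne_top.mp hG)

theorem Connected.exists_lift [Finite V] (hG : G.Connected) {K : ℤ} (hK : 2 * G.diam + 2 < K)
    (r : V → ℤ) (hr : ∀ a b, G.Adj a b → dK K (r a) (r b) ≤ 1) :
    ∃ s : V → ℤ, (∀ v, s v ≡ r v [ZMOD K]) ∧ ∀ a b, G.Adj a b → |s a - s b| ≤ 1 := by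
  have hK0 : 0 < K := by omega
  obtain ⟨v₀⟩ := hG.nonempty
  choose x hxr hxd using fun v => exists_modEq_abs_eq_dK hK0 (r v) (r v₀)
  have hxD (v : V) : |x v| ≤ G.diam :=
    hxd v ▸ hG.le_diam_of_adj_le_one (d := fun a b => dK K (r a) (r b))
      (fun _ => dK_self _) (fun _ _ _ => dK_triangle hK0 _ _ _) hr v v₀
  refine ⟨fun v => r v₀ + x v, fun v => by simpa using ((hxr v).add_left (r v₀)).symm,
    fun a b hab => ?_⟩
  obtain ⟨e, he, hed⟩ := exists_modEq_abs_eq_dK hK0 (r a) (r b)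
  -- `x a - x b` and `e` are congruent representatives of `r a - r b`, and too small to differ.
  have : x a - x b = e := by
    refine ((hxr a).symm.sub (hxr b).symm |>.trans (by simpa using he)).eq_of_abs_sub_lt ?_
    have ha := abs_le.mp (hxD a)
    have hb := abs_le.mp (hxD b)
    have he1 := abs_le.mp (hed ▸ hr a b hab)
    rw [abs_lt]
    constructor <;> omega
  simpa [this, hed] using hr a b hab

noncomputable def unisonStep (G : SimpleGraph V) (s : V → ℤ) (v : V) : ℤ :=
  if ∀ u, G.Adj v u → s v ≤ s u then s v + 1 else s v

theorem unisonStep_le (s : V → ℤ) (v : V) : G.unisonStep s v ≤ s v + 1 := by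
  unfold unisonStep; split <;> omega

theorem add_one_le_unisonStep {s : V → ℤ} {q : V} (hq : ∀ u, s q ≤ s u) (v : V) :
    s q + 1 ≤ G.unisonStep s v := by
  unfold unisonStep
  split_ifs with hmin
  · linarith [hq v]
  · -- a vertex carrying the global minimum is locally minimal
    have : s q ≠ s v := fun hqv => hmin fun u _ => hqv ▸ hq u
    have := hq v
    omega

theorem unisonStep_modEq {K : ℤ} (hK : 2 < K) {r s : V → ℤ} (hsr : ∀ v, s v ≡ r v [ZMOD K])
    (hs : ∀ a b, G.Adj a b → |s a - s b| ≤ 1) (v : V) :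
    (if ∀ u, G.Adj v u → lle K (r v) (r u) then (r v + 1) % K else r v) ≡
      G.unisonStep s v [ZMOD K] := by
  have hmin : (∀ u, G.Adj v u → lle K (r v) (r u)) ↔ ∀ u, G.Adj v u → s v ≤ s u :=
    forall₂_congr fun u huv => by
      rw [lle_iff_nonneg_of_modEq hK ((hsr u).sub (hsr v)).symm
        (abs_sub_comm (s v) (s u) ▸ hs v u huv), sub_nonneg]
  unfold unisonStep
  simp only [hmin]
  split_ifs
  · exact (Int.mod_modEq _ _).trans ((hsr v).symm.add_right 1)
  · exact (hsr v).symm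

end SimpleGraph

open SimpleGraph in
/-- Under a synchronous unison step (every `≤_l`-locally-minimal vertex
increments by `1` mod `K`), starting from a safety-satisfying configuration
(adjacent values at `d_K`-distance ≤ 1, `K > 2·diam(g)+2`) on a finite
connected graph, the maximal pairwise `d_K`-spread does not increase. -/
theorem stmt19 {V : Type*} [Fintype V] [Nonempty V]
    (g : SimpleGraph V) (hconn : g.Connected)
    (K : ℤ) (hK : (2 * g.diam + 2 : ℤ) < K)
    (r : V → ℤ)
    (hsafe : ∀ u v : V, g.Adj u v → dK K (r u) (r v) ≤ 1)
    (r' : V → ℤ)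
    (hstep : ∀ v, r' v =
      if ∀ u, g.Adj v u → lle K (r v) (r u) then (r v + 1) % K else r v) :
    (Finset.univ ×ˢ Finset.univ).sup' (by simp)
        (fun p : V × V => dK K (r' p.1) (r' p.2)) ≤
    (Finset.univ ×ˢ Finset.univ).sup' (by simp)
        (fun p : V × V => dK K (r p.1) (r p.2)) := by
  have hK0 : 0 < K := by omega
  obtain ⟨s, hsr, hs⟩ := hconn.exists_lift hK r hsafe
  have hsD : ∀ u v, |s u - s v| ≤ g.diam :=
    hconn.le_diam_of_adj_le_one (d := fun a b => |s a - s b|) (by simp)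
      (fun _ _ _ => abs_sub_le _ _ _) hs
  have hr' (v : V) : r' v ≡ g.unisonStep s v [ZMOD K] := by
    rw [hstep v]
    convert unisonStep_modEq (by omega) hsr hs v
  obtain ⟨p, hp⟩ := Finite.exists_max s
  obtain ⟨q, hq⟩ := Finite.exists_min s
  have hpq : s p - s q ≤ g.diam := (le_abs_self _).trans (hsD p q)
  have hspread (u v : V) : |g.unisonStep s u - g.unisonStep s v| ≤ s p - s q := by
    have hlow := add_one_le_unisonStep (G := g) hq
    have hup := unisonStep_le (G := g) s
    rw [abs_sub_le_iff]
    constructor <;> linarith [hlow u, hlow v, hup u, hup v, hp u, hp v]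
  refine Finset.sup'_le _ _ fun ⟨u, v⟩ _ => ?_
  calc dK K (r' u) (r' v) = |g.unisonStep s u - g.unisonStep s v| :=
        dK_eq_abs_of_modEq hK0 ((hr' u).sub (hr' v)) (by linarith [hspread u v])
    _ ≤ s p - s q := hspread u v
    _ = dK K (r p) (r q) := by
        rw [dK_eq_abs_of_modEq hK0 ((hsr p).sub (hsr q)).symm (by linarith [hsD p q]),
          abs_of_nonneg (sub_nonneg.mpr (hq p))]
    _ ≤ _ := Finset.le_sup' (fun x : V × V => dK K (r x.1) (r x.2)) (b := (p, q)) (by simp)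
end
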